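/- (FTRL regret for linear losses with scaled regularizer) With linear losses ℓ_t(w) = ⟨g_t, w⟩ and regularizers ψ_t(w) = ψ(w)/η_t for a fixed function ψ ≥ 0 with ψ(w_1)/η_0 = 0 (interpreting 1/η_0 = 0), the FTRL iterates w_{t+1} = argmin_w [ψ(w)/η_t + ⟨g_{1:t}, w⟩] satisfy, for any u, ∑_{t=1}^T ⟨g_t, w_t − u⟩ ≤ ψ(u)/η_T + ∑_{t=1}^T [(1/η_{t−1} − 1/η_t)·ψ(w_{t+1}) + ⟨g_t, w_t − w_{t+1}⟩]. -/

import Mathlib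

open Finset
open scoped RealInnerProductSpace

/-! Be-the-leader: write `F t v = ψ v / η t + ⟪g_{1:t}, v⟫` for the FTRL objective. Since
`w t` minimises `F (t - 1)`, we have `F (t - 1) (w t) ≤ F (t - 1) (w (t + 1))`, so the increments
`F t - F (t - 1) = (1/η t - 1/η (t-1)) ψ + ⟪g t, ·⟫`, evaluated at `w (t + 1)`, sum to at most
`F T (w (T + 1)) - F 0 (w 1) ≤ F T u`. Here `F 0 = 0` because `η 0 = 0` and `1 / 0 = 0`, which
encodes the convention `1/η_0 = 0`. -/

theorem sum_sub_le_of_le_succ {α : Type*} (F : ℕ → α → ℝ) (w : ℕ → α) (n : ℕ)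
    (hleader : ∀ t ∈ Icc 1 n, F (t - 1) (w t) ≤ F (t - 1) (w (t + 1))) :
    ∑ t ∈ Icc 1 n, (F t (w (t + 1)) - F (t - 1) (w (t + 1))) ≤ F n (w (n + 1)) - F 0 (w 1) := by
  induction n with
  | zero => simp
  | succ n ih =>
    have hprev := ih fun t ht => hleader t (Icc_subset_Icc_right n.le_succ ht)
    have hlast := hleader (n + 1) (right_mem_Icc.mpr n.succ_pos)
    rw [sum_Icc_succ_top n.succ_pos]
    simp only [Nat.add_sub_cancel] at hlast ⊢
    linarith

section FTRL

variable {E : Type*} [NormedAddCommGroup E] [InnerProductSpace ℝ E]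

noncomputable def ftrlObjective (ψ : E → ℝ) (η : ℕ → ℝ) (g : ℕ → E) (t : ℕ) (v : E) : ℝ :=
  ψ v / η t + ⟪∑ s ∈ Icc 1 t, g s, v⟫

variable (ψ : E → ℝ) (η : ℕ → ℝ) (g : ℕ → E)

theorem ftrlObjective_zero (hη0 : η 0 = 0) (v : E) : ftrlObjective ψ η g 0 v = 0 := by
  simp [ftrlObjective, hη0]

theorem ftrlObjective_succ_sub (t : ℕ) (v : E) :
    ftrlObjective ψ η g (t + 1) v - ftrlObjective ψ η g t v =
      (1 / η (t + 1) - 1 / η t) * ψ v + ⟪g (t + 1), v⟫ := by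
  simp only [ftrlObjective, sum_Icc_succ_top (Nat.le_add_left 1 t), inner_add_left]
  ring

end FTRL

theorem stmt4_general {E : Type*} [NormedAddCommGroup E] [InnerProductSpace ℝ E] (T : ℕ)
    (g : ℕ → E) (ψ : E → ℝ)
    (η : ℕ → ℝ) (hη0 : η 0 = 0)
    (w : ℕ → E)
    (hmin : ∀ t ∈ Icc 1 T, ∀ v,
      ψ (w (t + 1)) / η t + ⟪∑ s ∈ Icc 1 t, g s, w (t + 1)⟫ ≤
        ψ v / η t + ⟪∑ s ∈ Icc 1 t, g s, v⟫)
    (u : E) :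
    ∑ t ∈ Icc 1 T, ⟪g t, w t - u⟫ ≤
      ψ u / η T + ∑ t ∈ Icc 1 T,
        ((1 / η (t - 1) - 1 / η t) * ψ (w (t + 1)) + ⟪g t, w t - w (t + 1)⟫) := by
  set F := ftrlObjective ψ η g
  have hleader : ∀ t ≤ T, ∀ v, F t (w (t + 1)) ≤ F t v := by
    rintro (_ | t) ht v
    · simp only [F, ftrlObjective_zero ψ η g hη0, le_refl]
    · exact hmin (t + 1) (mem_Icc.mpr ⟨t.succ_pos, ht⟩) v
  have hbtl := sum_sub_le_of_le_succ F w T fun t ht => by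
    obtain ⟨ht1, htT⟩ := mem_Icc.mp ht
    simpa only [Nat.sub_add_cancel ht1] using hleader (t - 1) (by omega) (w (t + 1))
  have hincr : ∀ t ∈ Icc 1 T, ⟪g t, w t - u⟫ -
      ((1 / η (t - 1) - 1 / η t) * ψ (w (t + 1)) + ⟪g t, w t - w (t + 1)⟫) =
        (F t (w (t + 1)) - F (t - 1) (w (t + 1))) - ⟪g t, u⟫ := by
    intro t ht
    obtain ⟨s, rfl⟩ := Nat.exists_eq_add_of_le' (mem_Icc.mp ht).1
    rw [Nat.add_sub_cancel, ftrlObjective_succ_sub, inner_sub_right, inner_sub_right]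
    ring
  have hF0 : F 0 (w 1) = 0 := ftrlObjective_zero ψ η g hη0 (w 1)
  have hbound := hleader T le_rfl u
  have hregret : ∑ t ∈ Icc 1 T, (⟪g t, w t - u⟫ -
      ((1 / η (t - 1) - 1 / η t) * ψ (w (t + 1)) + ⟪g t, w t - w (t + 1)⟫)) ≤ ψ u / η T := by
    rw [sum_congr rfl hincr, sum_sub_distrib, ← sum_inner]
    have hFu : F T u = ψ u / η T + ⟪∑ t ∈ Icc 1 T, g t, u⟫ := rfl
    linarith
  rw [sum_sub_distrib] at hregret
  linarith

/-- FTRL regret bound for linear losses with regularizers ψ(w)/η_t (1/η_0 interpreted as 0). -/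
theorem stmt4 {E : Type*} [NormedAddCommGroup E] [InnerProductSpace ℝ E] (T : ℕ)
    (g : ℕ → E) (ψ : E → ℝ) (hψ : ∀ v, 0 ≤ ψ v)
    (η : ℕ → ℝ) (hη0 : η 0 = 0) (hηpos : ∀ t, 1 ≤ t → 0 < η t)
    (hηmono : ∀ t, 1 ≤ t → η (t + 1) ≤ η t)
    (w : ℕ → E)
    (hmin : ∀ t ∈ Icc 1 T, ∀ v,
      ψ (w (t + 1)) / η t + ⟪∑ s ∈ Icc 1 t, g s, w (t + 1)⟫ ≤
        ψ v / η t + ⟪∑ s ∈ Icc 1 t, g s, v⟫)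
    (u : E) :
    ∑ t ∈ Icc 1 T, ⟪g t, w t - u⟫ ≤
      ψ u / η T + ∑ t ∈ Icc 1 T,
        ((1 / η (t - 1) - 1 / η t) * ψ (w (t + 1)) + ⟪g t, w t - w (t + 1)⟫) :=
  stmt4_general T g ψ η hη0 w hmin u
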